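/- arXiv:1903.03928 — 6 statements merged into one kernel-verified Lean document; each statement's English description precedes it below -/
import Mathlib

section
/- For any invertible linear map A of a finite-dimensional real inner product space V and any vector w in V, we have ‖Aw‖ ≥ cos(∠(w, v(A))) · ‖A‖ · ‖w‖, where v(A) denotes a unit vector achieving the operator norm of A (i.e., the right singular vector corresponding to the largest singular value) and ∠ denotes the angle between the lines spanned by the vectors. -/
open scoped RealInnerProductSpace

/-!
If `‖A v‖ = ‖A‖ ‖v‖`, then `t ↦ ‖A‖² ‖v + t u‖² - ‖A (v + t u)‖²` is a nonnegative quadratic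
vanishing at `t = 0`, so its linear coefficient vanishes: `⟪A v, A u⟫ = ‖A‖² ⟪v, u⟫` for every
`u`. Taking `u = w` and applying Cauchy–Schwarz to `⟪A v, A w⟫` gives
`‖A‖² |⟪w, v⟫| ≤ ‖A‖ ‖v‖ ‖A w‖`.
-/

section NormAttaining

variable {E F : Type*} [NormedAddCommGroup E] [InnerProductSpace ℝ E]
  [NormedAddCommGroup F] [InnerProductSpace ℝ F]

theorem ContinuousLinearMap.inner_map_map_of_norm_map_eq (T : E →L[ℝ] F) {v : E}
    (hTv : ‖T v‖ = ‖T‖ * ‖v‖) (u : E) : ⟪T v, T u⟫ = ‖T‖ ^ 2 * ⟪v, u⟫ := by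
  have hquad : ∀ t : ℝ, 0 ≤ (‖T‖ ^ 2 * ‖u‖ ^ 2 - ‖T u‖ ^ 2) * (t * t)
      + 2 * (‖T‖ ^ 2 * ⟪v, u⟫ - ⟪T v, T u⟫) * t + 0 := by
    intro t
    have hle : ‖T (v + t • u)‖ ^ 2 ≤ (‖T‖ * ‖v + t • u‖) ^ 2 :=
      pow_le_pow_left₀ (norm_nonneg _) (T.le_opNorm _) 2
    simp only [map_add, map_smul, norm_add_sq_real, norm_smul, real_inner_smul_right, hTv,
      mul_pow, Real.norm_eq_abs, sq_abs] at hle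
    nlinarith
  have hdiscrim := discrim_le_zero hquad
  rw [discrim] at hdiscrim
  nlinarith [sq_nonneg (‖T‖ ^ 2 * ⟪v, u⟫ - ⟪T v, T u⟫)]

theorem ContinuousLinearMap.abs_inner_mul_opNorm_le_of_norm_map_eq (T : E →L[ℝ] F) {v : E}
    (hTv : ‖T v‖ = ‖T‖ * ‖v‖) (w : E) : |⟪w, v⟫| * ‖T‖ ≤ ‖T w‖ * ‖v‖ := by
  rcases (norm_nonneg T).eq_or_lt with hT | hT
  · rw [← hT, mul_zero]
    positivity
  refine le_of_mul_le_mul_right ?_ hT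
  calc |⟪w, v⟫| * ‖T‖ * ‖T‖ = |⟪T v, T w⟫| := by
        rw [T.inner_map_map_of_norm_map_eq hTv, abs_mul, abs_pow, abs_norm,
          real_inner_comm]
        ring
    _ ≤ ‖T v‖ * ‖T w‖ := abs_real_inner_le_norm _ _
    _ = ‖T w‖ * ‖v‖ * ‖T‖ := by rw [hTv]; ring

end NormAttaining

theorem stmt0_general
    {V : Type*} [NormedAddCommGroup V] [InnerProductSpace ℝ V]
    (A : V ≃L[ℝ] V) (v : V) (hv1 : ‖v‖ = 1)
    (hvA : ‖(A : V →L[ℝ] V) v‖ = ‖(A : V →L[ℝ] V)‖)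
    (w : V) :
    |(⟪w, v⟫)| / (‖w‖ * ‖v‖) * ‖(A : V →L[ℝ] V)‖ * ‖w‖ ≤ ‖(A : V →L[ℝ] V) w‖ := by
  have hbound := (A : V →L[ℝ] V).abs_inner_mul_opNorm_le_of_norm_map_eq
    (by rw [hvA, hv1, mul_one]) w
  rw [hv1, mul_one] at hbound ⊢
  calc |⟪w, v⟫| / ‖w‖ * ‖(A : V →L[ℝ] V)‖ * ‖w‖
      = |⟪w, v⟫| * ‖(A : V →L[ℝ] V)‖ * (‖w‖ / ‖w‖) := by ring
    _ ≤ |⟪w, v⟫| * ‖(A : V →L[ℝ] V)‖ * 1 := by gcongr; exact div_self_le_one _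
    _ ≤ ‖(A : V →L[ℝ] V) w‖ := by rwa [mul_one]

/-- For an invertible linear map `A` of a finite-dimensional real inner
product space `V` and any `w ∈ V`, `‖Aw‖ ≥ cos ∠(w, v(A)) · ‖A‖ · ‖w‖`, where `v = v(A)` is a
unit vector achieving the operator norm of `A` and
`cos ∠(w, v) = |⟨w, v⟩| / (‖w‖ · ‖v‖)`. -/
theorem stmt0
    {V : Type*} [NormedAddCommGroup V] [InnerProductSpace ℝ V] [FiniteDimensional ℝ V]
    (A : V ≃L[ℝ] V) (v : V) (hv1 : ‖v‖ = 1)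
    (hvA : ‖(A : V →L[ℝ] V) v‖ = ‖(A : V →L[ℝ] V)‖)
    (w : V) :
    |(⟪w, v⟫)| / (‖w‖ * ‖v‖) * ‖(A : V →L[ℝ] V)‖ * ‖w‖ ≤ ‖(A : V →L[ℝ] V) w‖ :=
  stmt0_general A v hv1 hvA w
end

section
/- Let θ > 0 and let A, B, C, D be invertible linear maps of a finite-dimensional real inner product space V such that the angle between B*v(A) and the hyperplane orthogonal to C u(D) is greater than θ. Then ‖ABCD‖ ≥ ‖A‖·‖D‖·sin(θ)·m(B)²m(C)²/(‖B‖‖C‖), where m(X) = ‖X⁻¹‖⁻¹ is the co-norm and u(X), v(X) are unit vectors with X v(X) = ‖X‖ u(X). -/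
/-!
Pairing `ABCD v(D)` with `u(A)` and moving `A` across the inner product turns the left singular
vector of `A` into its right one, so `‖ABCD‖ ≥ ‖A‖‖D‖ |⟪B* v(A), C u(D)⟫|`; the angle hypothesis
bounds this below by `‖A‖‖D‖ sin θ ‖B* v(A)‖ ‖C u(D)‖`. Finally the co-norm bounds a unit vector's
image from below, `m(B) ≤ ‖B* v(A)‖ ≤ ‖B‖`, hence `m(B)² / ‖B‖ ≤ ‖B* v(A)‖`, and likewise for `C`.
-/

open scoped RealInnerProductSpace

open ContinuousLinearMap

theorem sq_div_le_of_le_of_le {α : Type*} [Field α] [LinearOrder α] [IsStrictOrderedRing α]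
    {a b c : α} (ha : 0 ≤ a) (hab : a ≤ b) (hbc : b ≤ c) : a ^ 2 / c ≤ b :=
  calc a ^ 2 / c = a * (a / c) := by ring
    _ ≤ a * 1 := by
        gcongr
        exact div_le_one_of_le₀ (hab.trans hbc) (ha.trans (hab.trans hbc))
    _ ≤ b := by rwa [mul_one]

theorem ContinuousLinearMap.inv_norm_le_norm_apply_of_comp_eq_id {𝕜 E F : Type*}
    [NontriviallyNormedField 𝕜] [NormedAddCommGroup E] [NormedSpace 𝕜 E]
    [NormedAddCommGroup F] [NormedSpace 𝕜 F] {f : E →L[𝕜] F} {g : F →L[𝕜] E}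
    (hgf : g ∘L f = .id 𝕜 E) {x : E} (hx : ‖x‖ = 1) : ‖g‖⁻¹ ≤ ‖f x‖ := by
  have hle : 1 ≤ ‖g‖ * ‖f x‖ :=
    calc 1 = ‖g (f x)‖ := by rw [← comp_apply, hgf, id_apply, hx]
      _ ≤ ‖g‖ * ‖f x‖ := g.le_opNorm _
  rcases (norm_nonneg g).eq_or_lt with hg | hg
  · rw [← hg, inv_zero]
    exact norm_nonneg _
  · exact (inv_le_iff_one_le_mul₀' hg).2 hle

section Adjoint

variable {𝕜 E F : Type*} [RCLike 𝕜] [NormedAddCommGroup E] [InnerProductSpace 𝕜 E]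
  [CompleteSpace E] [NormedAddCommGroup F] [InnerProductSpace 𝕜 F] [CompleteSpace F]

theorem ContinuousLinearMap.norm_adjoint_apply_le (f : E →L[𝕜] F) {x : F} (hx : ‖x‖ ≤ 1) :
    ‖adjoint f x‖ ≤ ‖f‖ :=
  (LinearIsometryEquiv.norm_map adjoint f) ▸ (adjoint f).unit_le_opNorm x hx

theorem ContinuousLinearEquiv.inv_norm_symm_le_norm_adjoint_apply (e : E ≃L[𝕜] F) {x : F}
    (hx : ‖x‖ = 1) : ‖(e.symm : F →L[𝕜] E)‖⁻¹ ≤ ‖adjoint (e : E →L[𝕜] F) x‖ := by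
  rw [← LinearIsometryEquiv.norm_map adjoint (e.symm : F →L[𝕜] E)]
  refine inv_norm_le_norm_apply_of_comp_eq_id ?_ hx
  rw [← adjoint_comp, e.coe_comp_coe_symm, adjoint_id]

end Adjoint

section Real

variable {E F G H : Type*} [NormedAddCommGroup E] [InnerProductSpace ℝ E]
  [NormedAddCommGroup F] [InnerProductSpace ℝ F] [CompleteSpace F]
  [NormedAddCommGroup G] [InnerProductSpace ℝ G] [CompleteSpace G]
  [NormedAddCommGroup H] [InnerProductSpace ℝ H]

theorem ContinuousLinearMap.adjoint_apply_eq_of_apply_eq_norm_smul (A : F →L[ℝ] G) {u : G} {v : F}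
    (hu : ‖u‖ = 1) (hv : ‖v‖ = 1) (hA : A v = ‖A‖ • u) : adjoint A u = ‖A‖ • v := by
  have hinner : ⟪adjoint A u, v⟫ = ‖A‖ := by
    rw [adjoint_inner_left, hA, real_inner_smul_right, real_inner_self_eq_norm_sq, hu, one_pow,
      mul_one]
  have hle : ‖adjoint A u‖ ≤ ‖A‖ := A.norm_adjoint_apply_le hu.le
  have hsq : ‖adjoint A u - ‖A‖ • v‖ ^ 2 ≤ 0 := by
    rw [norm_sub_sq_real, real_inner_smul_right, hinner, norm_smul, hv,
      Real.norm_of_nonneg (norm_nonneg A)]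
    nlinarith [norm_nonneg (adjoint A u)]
  rw [← sub_eq_zero, ← norm_eq_zero]
  exact (sq_nonpos_iff _).1 hsq

theorem ContinuousLinearMap.norm_mul_norm_mul_abs_inner_le_norm_comp (A : F →L[ℝ] G)
    (T : E →L[ℝ] F) (D : H →L[ℝ] E) {uA : G} {vA : F} {uD : E} {vD : H}
    (huA : ‖uA‖ = 1) (hvA : ‖vA‖ = 1) (hvD : ‖vD‖ = 1)
    (hA : A vA = ‖A‖ • uA) (hD : D vD = ‖D‖ • uD) :
    ‖A‖ * ‖D‖ * |⟪vA, T uD⟫| ≤ ‖A ∘L T ∘L D‖ := by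
  have hinner : ⟪uA, (A ∘L T ∘L D) vD⟫ = ‖A‖ * ‖D‖ * ⟪vA, T uD⟫ := by
    rw [comp_apply, comp_apply, hD, map_smul, ← adjoint_inner_left,
      A.adjoint_apply_eq_of_apply_eq_norm_smul huA hvA hA, real_inner_smul_left,
      real_inner_smul_right]
    ring
  calc ‖A‖ * ‖D‖ * |⟪vA, T uD⟫| = |⟪uA, (A ∘L T ∘L D) vD⟫| := by
        rw [hinner, abs_mul, abs_of_nonneg (by positivity : 0 ≤ ‖A‖ * ‖D‖)]
    _ ≤ ‖uA‖ * ‖(A ∘L T ∘L D) vD‖ := abs_real_inner_le_norm _ _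
    _ ≤ ‖A ∘L T ∘L D‖ := by
        rw [huA, one_mul]
        exact unit_le_opNorm _ _ hvD.le

end Real

theorem stmt1_general
    {V : Type*} [NormedAddCommGroup V] [InnerProductSpace ℝ V] [FiniteDimensional ℝ V]
    (θ : ℝ)
    (A B C D : V ≃L[ℝ] V)
    (uA vA uD vD : V)
    (huA : ‖uA‖ = 1) (hvA : ‖vA‖ = 1) (huD : ‖uD‖ = 1) (hvD : ‖vD‖ = 1)
    (hA : (A : V →L[ℝ] V) vA = ‖(A : V →L[ℝ] V)‖ • uA)
    (hD : (D : V →L[ℝ] V) vD = ‖(D : V →L[ℝ] V)‖ • uD)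
    (hangle : ‖ContinuousLinearMap.adjoint (B : V →L[ℝ] V) vA‖ * ‖(C : V →L[ℝ] V) uD‖ *
        Real.sin θ
      ≤ |(⟪ContinuousLinearMap.adjoint (B : V →L[ℝ] V) vA, (C : V →L[ℝ] V) uD⟫)|) :
    ‖(A : V →L[ℝ] V)‖ * ‖(D : V →L[ℝ] V)‖ * Real.sin θ *
        (‖(B.symm : V →L[ℝ] V)‖⁻¹) ^ 2 * (‖(C.symm : V →L[ℝ] V)‖⁻¹) ^ 2 /
        (‖(B : V →L[ℝ] V)‖ * ‖(C : V →L[ℝ] V)‖)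
      ≤ ‖((D.trans (C.trans (B.trans A))) : V →L[ℝ] V)‖ := by
  have hcomp : ((D.trans (C.trans (B.trans A))) : V →L[ℝ] V) =
      (A : V →L[ℝ] V) ∘L ((B : V →L[ℝ] V) ∘L (C : V →L[ℝ] V)) ∘L (D : V →L[ℝ] V) := rfl
  have hkey := norm_mul_norm_mul_abs_inner_le_norm_comp (A : V →L[ℝ] V)
    ((B : V →L[ℝ] V) ∘L (C : V →L[ℝ] V)) (D : V →L[ℝ] V) huA hvA hvD hA hD
  rw [comp_apply, ← adjoint_inner_left, ← hcomp] at hkey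
  have hB : ‖(B.symm : V →L[ℝ] V)‖⁻¹ ^ 2 / ‖(B : V →L[ℝ] V)‖ ≤ ‖adjoint (B : V →L[ℝ] V) vA‖ :=
    sq_div_le_of_le_of_le (inv_nonneg.2 (norm_nonneg _))
      (B.inv_norm_symm_le_norm_adjoint_apply hvA) (norm_adjoint_apply_le _ hvA.le)
  have hC : ‖(C.symm : V →L[ℝ] V)‖⁻¹ ^ 2 / ‖(C : V →L[ℝ] V)‖ ≤ ‖(C : V →L[ℝ] V) uD‖ :=
    sq_div_le_of_le_of_le (inv_nonneg.2 (norm_nonneg _))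
      (inv_norm_le_norm_apply_of_comp_eq_id C.coe_symm_comp_coe huD) (unit_le_opNorm _ _ huD.le)
  set a := ‖(A : V →L[ℝ] V)‖
  set d := ‖(D : V →L[ℝ] V)‖
  rcases le_or_gt 0 (Real.sin θ) with hsin | hsin
  · calc _ = a * d * Real.sin θ * (‖(B.symm : V →L[ℝ] V)‖⁻¹ ^ 2 / ‖(B : V →L[ℝ] V)‖) *
          (‖(C.symm : V →L[ℝ] V)‖⁻¹ ^ 2 / ‖(C : V →L[ℝ] V)‖) := by ring
      _ ≤ a * d * Real.sin θ * ‖adjoint (B : V →L[ℝ] V) vA‖ * ‖(C : V →L[ℝ] V) uD‖ := by gcongr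
      _ ≤ _ := by linarith [mul_le_mul_of_nonneg_left hangle (by positivity : 0 ≤ a * d)]
  · calc _ = Real.sin θ * (a * d * (‖(B.symm : V →L[ℝ] V)‖⁻¹) ^ 2 *
          (‖(C.symm : V →L[ℝ] V)‖⁻¹) ^ 2 / (‖(B : V →L[ℝ] V)‖ * ‖(C : V →L[ℝ] V)‖)) := by ring
      _ ≤ 0 := mul_nonpos_of_nonpos_of_nonneg hsin.le (by positivity)
      _ ≤ _ := norm_nonneg _

/-- If `θ > 0` and `A, B, C, D` are invertible linear maps of a
finite-dimensional real inner product space such that the angle between `B* v(A)` and the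
hyperplane orthogonal to `C u(D)` is greater than `θ` (equivalently
`|⟨B* v(A), C u(D)⟩| ≥ ‖B* v(A)‖·‖C u(D)‖·sin θ`), then
`‖ABCD‖ ≥ ‖A‖·‖D‖·sin θ·m(B)² m(C)² / (‖B‖‖C‖)`, where `m(X) = ‖X⁻¹‖⁻¹` is the co-norm
and `u(X), v(X)` are unit vectors with `X v(X) = ‖X‖ u(X)`. -/
theorem stmt1
    {V : Type*} [NormedAddCommGroup V] [InnerProductSpace ℝ V] [FiniteDimensional ℝ V]
    (θ : ℝ) (hθ : 0 < θ)
    (A B C D : V ≃L[ℝ] V)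
    (uA vA uD vD : V)
    (huA : ‖uA‖ = 1) (hvA : ‖vA‖ = 1) (huD : ‖uD‖ = 1) (hvD : ‖vD‖ = 1)
    (hA : (A : V →L[ℝ] V) vA = ‖(A : V →L[ℝ] V)‖ • uA)
    (hD : (D : V →L[ℝ] V) vD = ‖(D : V →L[ℝ] V)‖ • uD)
    (hangle : ‖ContinuousLinearMap.adjoint (B : V →L[ℝ] V) vA‖ * ‖(C : V →L[ℝ] V) uD‖ *
        Real.sin θ
      ≤ |(⟪ContinuousLinearMap.adjoint (B : V →L[ℝ] V) vA, (C : V →L[ℝ] V) uD⟫)|) :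
    ‖(A : V →L[ℝ] V)‖ * ‖(D : V →L[ℝ] V)‖ * Real.sin θ *
        (‖(B.symm : V →L[ℝ] V)‖⁻¹) ^ 2 * (‖(C.symm : V →L[ℝ] V)‖⁻¹) ^ 2 /
        (‖(B : V →L[ℝ] V)‖ * ‖(C : V →L[ℝ] V)‖)
      ≤ ‖((D.trans (C.trans (B.trans A))) : V →L[ℝ] V)‖ :=
  stmt1_general θ A B C D uA vA uD vD huA hvA huD hvD hA hD hangle
end

section
/- Let P be an invertible linear map of a d-dimensional real vector space with d simple real eigenvalues of pairwise distinct absolute values, with eigenvectors v₁,…,v_d. Then for every ε > 0 there exists N ∈ ℕ such that for every line L in projective space, there exists n ≤ N with Pⁿ L contained in the union of the ε-cones around the eigendirections v₁,…,v_d. -/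
open scoped RealInnerProductSpace

noncomputable def projAngle {V : Type*} [NormedAddCommGroup V] [InnerProductSpace ℝ V]
    (u w : V) : ℝ :=
  Real.arccos (|(⟪u, w⟫)| / (‖u‖ * ‖w‖))

/-!
Expand `w` in the eigenbasis and let `i` be the index of largest `|λᵢ|` among the nonzero
coordinates. Then `λᵢ⁻ⁿ Pⁿ w → wᵢ vᵢ`, so `Pⁿ w` eventually lies in the open cone around `vᵢ`
(if `λᵢ = 0`, already `w` is a multiple of `vᵢ`). The sets of `w` with `Pⁿ w` in some cone are
open and invariant under scaling, so finitely many of them cover the compact unit sphere, and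
hence every nonzero vector.
-/

open Filter Topology

section Cone

variable {V : Type*} [NormedAddCommGroup V] [InnerProductSpace ℝ V]

lemma projAngle_smul_left {c : ℝ} (hc : c ≠ 0) (u w : V) :
    projAngle (c • u) w = projAngle u w := by
  unfold projAngle
  rw [real_inner_smul_left, norm_smul, abs_mul, Real.norm_eq_abs, mul_assoc,
    mul_div_mul_left _ _ (abs_ne_zero.mpr hc)]

lemma projAngle_self {u : V} (hu : u ≠ 0) : projAngle u u = 0 := by
  unfold projAngle
  rw [real_inner_self_eq_norm_mul_norm, abs_of_nonneg (by positivity),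
    div_self (by positivity), Real.arccos_one]

lemma continuousAt_projAngle_left {u w : V} (hu : u ≠ 0) (hw : w ≠ 0) :
    ContinuousAt (projAngle · w) u := by
  unfold projAngle
  refine Real.continuous_arccos.continuousAt.comp (ContinuousAt.div ?_ ?_ (by positivity))
  · fun_prop
  · fun_prop

/-- The cone `C(w, ε)` of the paper, as a set of nonzero vectors rather than of lines. -/
def projCone (w : V) (ε : ℝ) : Set V := {u | u ≠ 0 ∧ projAngle u w < ε}

lemma self_mem_projCone {w : V} (hw : w ≠ 0) {ε : ℝ} (hε : 0 < ε) : w ∈ projCone w ε :=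
  ⟨hw, (projAngle_self hw).symm ▸ hε⟩

lemma smul_mem_projCone {c : ℝ} (hc : c ≠ 0) {u w : V} {ε : ℝ} (hu : u ∈ projCone w ε) :
    c • u ∈ projCone w ε :=
  ⟨smul_ne_zero hc hu.1, (projAngle_smul_left hc u w).symm ▸ hu.2⟩

lemma isOpen_projCone {w : V} (hw : w ≠ 0) (ε : ℝ) : IsOpen (projCone w ε) :=
  ContinuousOn.isOpen_inter_preimage
    (continuousOn_of_forall_continuousAt fun _ hu => continuousAt_projAngle_left hu hw)
    isOpen_compl_singleton isOpen_Iio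

end Cone

section Eigenbasis

variable {V ι : Type*} [NormedAddCommGroup V] [NormedSpace ℝ V] [Fintype ι]
  {f : V →ₗ[ℝ] V} {b : Module.Basis ι ℝ V} {lam : ι → ℝ}

lemma pow_apply_eq_sum_of_eigenbasis (hb : ∀ j, f (b j) = lam j • b j) (w : V) (n : ℕ) :
    (f ^ n) w = ∑ j, (b.repr w j * lam j ^ n) • b j := by
  conv_lhs => rw [← b.sum_repr w]
  refine (map_sum _ _ _).trans (Finset.sum_congr rfl fun j _ => ?_)
  have hj : Module.End.HasEigenvector f (lam j) (b j) :=
    ⟨Module.End.mem_eigenspace_iff.mpr (hb j), b.ne_zero j⟩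
  rw [map_smul, hj.pow_apply, smul_smul]

lemma tendsto_inv_pow_smul_pow_apply (hb : ∀ j, f (b j) = lam j • b j) {w : V} {i : ι}
    (hi : lam i ≠ 0) (hdom : ∀ j ≠ i, b.repr w j ≠ 0 → |lam j| < |lam i|) :
    Tendsto (fun n : ℕ => (lam i ^ n)⁻¹ • (f ^ n) w) atTop (𝓝 (b.repr w i • b i)) := by
  classical
  have hscaled (n : ℕ) :
      (lam i ^ n)⁻¹ • (f ^ n) w = ∑ j, (b.repr w j * (lam j / lam i) ^ n) • b j := by
    rw [pow_apply_eq_sum_of_eigenbasis hb, Finset.smul_sum]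
    refine Finset.sum_congr rfl fun j _ => ?_
    rw [smul_smul, div_pow]
    field_simp
  have hlimit : b.repr w i • b i = ∑ j, (b.repr w j * if j = i then 1 else 0) • b j := by
    simp
  simp_rw [hscaled]
  rw [hlimit]
  refine tendsto_finsetSum _ fun j _ => Tendsto.smul_const ?_ _
  rcases eq_or_ne j i with rfl | hji
  · simp [div_self hi]
  by_cases hcj : b.repr w j = 0
  · simp [hcj]
  have hratio : |lam j / lam i| < 1 := by
    rw [abs_div, div_lt_one (abs_pos.mpr hi)]
    exact hdom j hji hcj
  simpa [hji] using (tendsto_pow_atTop_nhds_zero_of_abs_lt_one hratio).const_mul (b.repr w j)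

end Eigenbasis

lemma exists_pow_apply_mem_projCone {V ι : Type*} [NormedAddCommGroup V]
    [InnerProductSpace ℝ V] [Fintype ι] {f : V →ₗ[ℝ] V} {b : Module.Basis ι ℝ V} {lam : ι → ℝ}
    (hb : ∀ j, f (b j) = lam j • b j) (habs : Function.Injective fun j => |lam j|)
    {w : V} (hw : w ≠ 0) {ε : ℝ} (hε : 0 < ε) : ∃ n i, (f ^ n) w ∈ projCone (b i) ε := by
  set c := b.repr w
  have hsupp : c.support.Nonempty :=
    Finsupp.support_nonempty_iff.mpr (b.repr.map_ne_zero_iff.mpr hw)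
  obtain ⟨i, hi, hmax⟩ := c.support.exists_max_image (|lam ·|) hsupp
  have hdom : ∀ j ≠ i, c j ≠ 0 → |lam j| < |lam i| := fun j hji hcj =>
    (hmax j (Finsupp.mem_support_iff.mpr hcj)).lt_of_ne (habs.ne hji)
  have hlimit : c i • b i ∈ projCone (b i) ε :=
    smul_mem_projCone (Finsupp.mem_support_iff.mp hi) (self_mem_projCone (b.ne_zero i) hε)
  by_cases hlam : lam i = 0
  · have hw_eq : w = c i • b i := by
      conv_lhs => rw [← b.sum_repr w]
      refine Finset.sum_eq_single i (fun j _ hji => ?_) (by simp)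
      by_contra hcj
      exact (abs_nonneg _).not_gt (by simpa [hlam] using hdom j hji (left_ne_zero_of_smul hcj))
    exact ⟨0, i, by simpa [← hw_eq] using hlimit⟩
  obtain ⟨n, hn⟩ := ((tendsto_inv_pow_smul_pow_apply hb hlam hdom).eventually
    ((isOpen_projCone (b.ne_zero i) ε).mem_nhds hlimit)).exists
  exact ⟨n, i, smul_inv_smul₀ (pow_ne_zero n hlam) ((f ^ n) w) ▸
    smul_mem_projCone (pow_ne_zero n hlam) hn⟩

lemma exists_uniform_index_of_smul_invariant_open_cover {V : Type*} [NormedAddCommGroup V]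
    [NormedSpace ℝ V] [ProperSpace V] {U : ℕ → Set V} (hU : ∀ n, IsOpen (U n))
    (hsmul : ∀ n {c : ℝ}, c ≠ 0 → ∀ {w}, w ∈ U n → c • w ∈ U n)
    (hcover : ∀ w ≠ 0, ∃ n, w ∈ U n) : ∃ N, ∀ w ≠ 0, ∃ n ≤ N, w ∈ U n := by
  obtain ⟨t, ht⟩ := (isCompact_sphere (0 : V) 1).elim_finite_subcover U hU fun w hw =>
    Set.mem_iUnion.mpr (hcover w (ne_zero_of_mem_sphere one_ne_zero ⟨w, hw⟩))
  refine ⟨t.sup id, fun w hw => ?_⟩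
  have hnw : ‖w‖ ≠ 0 := norm_ne_zero_iff.mpr hw
  obtain ⟨n, hnt, hn⟩ := Set.mem_iUnion₂.mp
    (ht (show ‖w‖⁻¹ • w ∈ Metric.sphere (0 : V) 1 by simp [norm_smul, hnw]))
  exact ⟨n, Finset.le_sup (f := id) hnt, by simpa [smul_smul, hnw] using hsmul n hnw hn⟩

theorem stmt2_general
    {V : Type*} [NormedAddCommGroup V] [InnerProductSpace ℝ V] [FiniteDimensional ℝ V]
    {d : ℕ} (hd : Module.finrank ℝ V = d)
    (P : V →ₗ[ℝ] V)
    (v : Fin d → V) (lam : Fin d → ℝ)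
    (hv : ∀ i, v i ≠ 0)
    (heig : ∀ i, P (v i) = lam i • v i)
    (habs : ∀ i j, i ≠ j → |lam i| ≠ |lam j|) :
    ∀ ε > (0 : ℝ), ∃ N : ℕ, ∀ w : V, w ≠ 0 →
      ∃ n ≤ N, ∃ i : Fin d, projAngle ((P ^ n) w) (v i) < ε := by
  intro ε hε
  have habs_inj : Function.Injective fun i => |lam i| :=
    fun i j h => by_contra fun hij => habs i j hij h
  have hli : LinearIndependent ℝ v := Module.End.eigenvectors_linearIndependent' P lam
    (habs_inj.of_comp (f := abs)) v fun i => ⟨Module.End.mem_eigenspace_iff.mpr (heig i), hv i⟩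
  let b := basisOfLinearIndependentOfCardEqFinrank' v hli (by simp [hd])
  have hb : ⇑b = v := coe_basisOfLinearIndependentOfCardEqFinrank' ..
  let U : ℕ → Set V := fun n => (P ^ n) ⁻¹' ⋃ i, projCone (v i) ε
  have hU_open (n : ℕ) : IsOpen (U n) :=
    (isOpen_iUnion fun i => isOpen_projCone (hv i) ε).preimage
      (P ^ n).continuous_of_finiteDimensional
  have hU_smul (n : ℕ) {c : ℝ} (hc : c ≠ 0) {w : V} (hw : w ∈ U n) : c • w ∈ U n := by
    obtain ⟨i, hi⟩ := Set.mem_iUnion.mp hw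
    exact Set.mem_iUnion.mpr ⟨i, (map_smul (P ^ n) c w).symm ▸ smul_mem_projCone hc hi⟩
  have hU_cover (w : V) (hw : w ≠ 0) : ∃ n, w ∈ U n := by
    obtain ⟨n, i, hi⟩ := exists_pow_apply_mem_projCone (b := b) (hb ▸ heig) habs_inj hw hε
    exact ⟨n, Set.mem_iUnion.mpr ⟨i, hb ▸ hi⟩⟩
  obtain ⟨N, hN⟩ := exists_uniform_index_of_smul_invariant_open_cover hU_open hU_smul hU_cover
  refine ⟨N, fun w hw => ?_⟩
  obtain ⟨n, hnN, hn⟩ := hN w hw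
  obtain ⟨i, hi⟩ := Set.mem_iUnion.mp hn
  exact ⟨n, hnN, i, hi.2⟩

/-- Let `P` be an invertible linear map of a `d`-dimensional real vector
space with `d` simple real eigenvalues of pairwise distinct absolute values, with eigenvectors
`v 0, …, v (d-1)`. Then for every `ε > 0` there is `N` such that every line is mapped by some
`Pⁿ`, `n ≤ N`, into the union of the `ε`-cones around the eigendirections. -/
theorem stmt2
    {V : Type*} [NormedAddCommGroup V] [InnerProductSpace ℝ V] [FiniteDimensional ℝ V]
    {d : ℕ} (hd : Module.finrank ℝ V = d)
    (P : V →ₗ[ℝ] V) (hP : Function.Bijective P)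
    (v : Fin d → V) (lam : Fin d → ℝ)
    (hv : ∀ i, v i ≠ 0)
    (heig : ∀ i, P (v i) = lam i • v i)
    (habs : ∀ i j, i ≠ j → |lam i| ≠ |lam j|) :
    ∀ ε > (0 : ℝ), ∃ N : ℕ, ∀ w : V, w ≠ 0 →
      ∃ n ≤ N, ∃ i : Fin d, projAngle ((P ^ n) w) (v i) < ε :=
  stmt2_general hd P v lam hv heig habs
end

section
/- For any d×d real matrix A and any 1 ≤ k ≤ d, the operator norm of the k-th exterior power A^∧k equals the product of the k largest singular values of A: ‖A^∧k‖ = α₁(A)⋯α_k(A). -/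
/-- The singular values `α₁(A) ≥ α₂(A) ≥ …` of a real `d × d` matrix (0-indexed, listed in
non-increasing order): the square roots of the eigenvalues of `Aᵀ A`, padded by `0`. -/
noncomputable def svalN {d : ℕ} (A : Matrix (Fin d) (Fin d) ℝ) (m : ℕ) : ℝ :=
  if h : m < d then
    Real.sqrt ((Matrix.isHermitian_conjTranspose_mul_self A).eigenvalues
      (Tuple.sort (fun j => -(Matrix.isHermitian_conjTranspose_mul_self A).eigenvalues j) ⟨m, h⟩))
  else 0

/-- The ℓ²-operator norm of a real matrix. -/
noncomputable def opNorm {m : Type*} [Fintype m] [DecidableEq m] (M : Matrix m m ℝ) : ℝ :=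
  ‖LinearMap.toContinuousLinearMap (Matrix.toEuclideanLin M)‖

/-- The `k`-th compound matrix of `A`: the matrix of the exterior power `A^∧k` in the
orthonormal basis of wedges of standard basis vectors, indexed by `k`-element subsets of
`Fin d`; its `(S, T)` entry is the `k × k` minor `det A[S, T]`. -/
noncomputable def compound {d : ℕ} (k : ℕ) (A : Matrix (Fin d) (Fin d) ℝ) :
    Matrix {s : Finset (Fin d) // s.card = k} {s : Finset (Fin d) // s.card = k} ℝ :=
  fun S T =>
    (A.submatrix (fun i : Fin k => ((S.1.orderIsoOfFin S.2 i : Fin d)))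
      (fun j : Fin k => ((T.1.orderIsoOfFin T.2 j : Fin d)))).det

/-!
`compound k A` is the matrix of `⋀^k A` in the wedge basis `e_S`, so functoriality of the
exterior power makes `compound k` multiplicative (this is Cauchy–Binet); it also commutes with
transposition, hence maps orthogonal matrices to orthogonal matrices. Diagonalising
`AᵀA = U D Uᵀ` gives `‖C A‖² = ‖C(AᵀA)‖ = ‖C U · C D · (C U)ᵀ‖ = ‖C D‖`, and `C D` is diagonal
with entries `∏_{x ∈ S} λ_x` over the eigenvalues `λ` of `AᵀA`; the largest of these over
`k`-sets `S` is the product of the `k` largest eigenvalues, `α₁(A)² ⋯ α_k(A)²`.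
-/

open Matrix

/-- `Set.powersetCard`, the index type of `Module.Basis.exteriorPower`, as the subtype used by
`compound`. -/
abbrev Set.powersetCard.equivSubtype (α : Type*) (n : ℕ) :
    Set.powersetCard α n ≃ {s : Finset α // s.card = n} :=
  Equiv.subtypeEquivRight fun _ => Set.powersetCard.mem_iff

section Compound

variable {d : ℕ} (k : ℕ)

lemma compound_eq_reindex_toMatrix (A : Matrix (Fin d) (Fin d) ℝ) :
    compound k A = reindexAlgEquiv ℝ ℝ (Set.powersetCard.equivSubtype (Fin d) k)
      (LinearMap.toMatrix ((Pi.basisFun ℝ (Fin d)).exteriorPower k)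
        ((Pi.basisFun ℝ (Fin d)).exteriorPower k) (exteriorPower.map k (toLin' A))) := by
  ext S T
  rw [coe_reindexAlgEquiv, reindex_apply, submatrix_apply, LinearMap.toMatrix_apply,
    exteriorPower.basis_apply, exteriorPower.ιMulti_family, exteriorPower.map_apply_ιMulti,
    exteriorPower.basis_repr_apply, exteriorPower.ιMultiDual_apply_ιMulti, ← det_transpose]
  unfold compound
  congr 1
  ext i j
  simp [Set.powersetCard.ofFinEmbEquiv_symm_apply, Finset.coe_orderIsoOfFin_apply]

lemma compound_mul (A B : Matrix (Fin d) (Fin d) ℝ) :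
    compound k (A * B) = compound k A * compound k B := by
  rw [compound_eq_reindex_toMatrix, compound_eq_reindex_toMatrix, compound_eq_reindex_toMatrix,
    toLin'_mul, exteriorPower.map_comp,
    LinearMap.toMatrix_comp _ ((Pi.basisFun ℝ (Fin d)).exteriorPower k), map_mul]

lemma compound_one : compound k (1 : Matrix (Fin d) (Fin d) ℝ) = 1 := by
  rw [compound_eq_reindex_toMatrix, toLin'_one, exteriorPower.map_id, LinearMap.toMatrix_id,
    map_one]

lemma compound_transpose (A : Matrix (Fin d) (Fin d) ℝ) :
    compound k Aᵀ = (compound k A)ᵀ := by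
  ext S T
  simp only [compound, transpose_apply, ← det_transpose (A.submatrix _ _), transpose_submatrix]

lemma compound_diagonal (v : Fin d → ℝ) :
    compound k (diagonal v) = diagonal fun S => ∏ x ∈ S.1, v x := by
  ext S T
  obtain rfl | hST := eq_or_ne S T
  · have he : Function.Injective fun i => (S.1.orderIsoOfFin S.2 i : Fin d) :=
      Subtype.val_injective.comp (S.1.orderIsoOfFin S.2).injective
    rw [diagonal_apply_eq, compound, submatrix_diagonal _ _ he, det_diagonal]
    exact ((S.1.orderIsoOfFin S.2).toEquiv.prod_comp fun x => v x).trans (S.1.prod_coe_sort v)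
  · obtain ⟨x, hxS, hxT⟩ : ∃ x ∈ S.1, x ∉ T.1 := Finset.not_subset.mp fun h =>
      hST (Subtype.ext (Finset.eq_of_subset_of_card_le h (by rw [S.2, T.2])))
    rw [diagonal_apply_ne _ hST, compound]
    refine det_eq_zero_of_row_eq_zero ((S.1.orderIsoOfFin S.2).symm ⟨x, hxS⟩) fun j => ?_
    rw [submatrix_apply, OrderIso.apply_symm_apply]
    exact diagonal_apply_ne _ fun h =>
      hxT ((congrArg (· ∈ T.1) h).mpr (T.1.orderIsoOfFin T.2 j).2)

variable {k}

lemma compound_mem_unitary {U : Matrix (Fin d) (Fin d) ℝ} (hU : U ∈ unitary _) :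
    compound k U ∈ unitary _ := by
  rw [← unitaryGroup, mem_unitaryGroup_iff', star_eq_conjTranspose,
    conjTranspose_eq_transpose_of_trivial] at hU ⊢
  rw [← compound_transpose, ← compound_mul, hU, compound_one]

end Compound

open scoped Matrix.Norms.L2Operator

lemma norm_compound_eq_norm_compound_diagonal_eigenvalues {d k : ℕ}
    {H : Matrix (Fin d) (Fin d) ℝ} (hH : H.IsHermitian) :
    ‖compound k H‖ = ‖compound k (diagonal hH.eigenvalues)‖ := by
  conv_lhs => rw [hH.spectral_theorem]
  have hU := hH.eigenvectorUnitary.2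
  rw [Unitary.conjStarAlgAut_apply, compound_mul, compound_mul,
    CStarRing.norm_mul_mem_unitary _ (compound_mem_unitary (Unitary.star_mem hU)),
    CStarRing.norm_mem_unitary_mul _ (compound_mem_unitary hU)]
  rfl

lemma Fin.val_le_of_strictMono {k d : ℕ} {f : Fin k → Fin d} (hf : StrictMono f) (i : Fin k) :
    (i : ℕ) ≤ f i := by
  have h := Finset.card_le_card_of_injOn f (s := Finset.Iio i) (t := Finset.Iio (f i))
    (fun j hj => by simpa using hf (by simpa using hj)) hf.injective.injOn
  simpa using h

lemma Finset.prod_le_prod_castLE_of_antitone {R : Type*} [CommMonoidWithZero R] [PartialOrder R]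
    [ZeroLEOneClass R] [PosMulMono R] {d k : ℕ} {g : Fin d → R} (hg : Antitone g) (hg0 : 0 ≤ g)
    (hkd : k ≤ d) {t : Finset (Fin d)} (ht : t.card = k) :
    ∏ y ∈ t, g y ≤ ∏ m : Fin k, g (Fin.castLE hkd m) := by
  rw [← t.map_orderEmbOfFin_univ ht, Finset.prod_map]
  exact Finset.prod_le_prod (fun _ _ => hg0 _) fun m _ =>
    hg (Fin.val_le_of_strictMono (t.orderEmbOfFin ht).strictMono m)

lemma Finset.prod_le_prod_sort {R : Type*} [CommRing R] [LinearOrder R] [IsOrderedRing R]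
    {d k : ℕ} {f : Fin d → R} (hf : 0 ≤ f) (hkd : k ≤ d) {S : Finset (Fin d)} (hS : S.card = k) :
    ∏ x ∈ S, f x ≤ ∏ m : Fin k, f (Tuple.sort (fun j => -f j) (Fin.castLE hkd m)) := by
  set σ := Tuple.sort fun j => -f j
  have hanti : Antitone (f ∘ σ) := fun a b hab => by
    simpa using Tuple.monotone_sort (fun j => -f j) hab
  have hS' : (S.map σ.symm.toEmbedding).card = k := by rw [Finset.card_map, hS]
  calc ∏ x ∈ S, f x = ∏ y ∈ S.map σ.symm.toEmbedding, f (σ y) := by simp [Finset.prod_map]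
    _ ≤ _ := Finset.prod_le_prod_castLE_of_antitone hanti (fun y => hf (σ y)) hkd hS'

lemma norm_prod_subsets_eq_prod_sort {d k : ℕ} {f : Fin d → ℝ} (hf : 0 ≤ f) (hkd : k ≤ d) :
    ‖fun S : {s : Finset (Fin d) // s.card = k} => ∏ x ∈ S.1, f x‖ =
      ∏ m : Fin k, f (Tuple.sort (fun j => -f j) (Fin.castLE hkd m)) := by
  set σ := Tuple.sort fun j => -f j
  have hnorm (S : Finset (Fin d)) : ‖∏ x ∈ S, f x‖ = ∏ x ∈ S, f x :=
    Real.norm_of_nonneg (Finset.prod_nonneg fun x _ => hf x)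
  refine le_antisymm ?_ ?_
  · refine (pi_norm_le_iff_of_nonneg (Finset.prod_nonneg fun m _ => hf _)).mpr fun S => ?_
    rw [hnorm]
    exact Finset.prod_le_prod_sort hf hkd S.2
  · let S₀ : {s : Finset (Fin d) // s.card = k} :=
      ⟨(Finset.univ.map (Fin.castLEEmb hkd)).map σ.toEmbedding, by simp⟩
    calc ∏ m : Fin k, f (σ (Fin.castLE hkd m)) = ‖∏ x ∈ S₀.1, f x‖ := by
          rw [hnorm]
          simp [S₀, Finset.prod_map]
      _ ≤ _ := norm_le_pi_norm (fun S : {s : Finset (Fin d) // s.card = k} => ∏ x ∈ S.1, f x) S₀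

theorem stmt4_general {d k : ℕ} (hkd : k ≤ d) (A : Matrix (Fin d) (Fin d) ℝ) :
    opNorm (compound k A) = ∏ i ∈ Finset.range k, svalN A i := by
  set hAA := isHermitian_conjTranspose_mul_self A
  have heig : 0 ≤ hAA.eigenvalues := eigenvalues_conjTranspose_mul_self_nonneg A
  have hsq : ‖compound k A‖ * ‖compound k A‖ =
      ∏ m : Fin k,
        hAA.eigenvalues (Tuple.sort (fun j => -hAA.eigenvalues j) (Fin.castLE hkd m)) := by
    rw [← l2_opNorm_conjTranspose_mul_self, conjTranspose_eq_transpose_of_trivial,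
      ← compound_transpose, ← compound_mul, ← conjTranspose_eq_transpose_of_trivial,
      norm_compound_eq_norm_compound_diagonal_eigenvalues hAA, compound_diagonal,
      l2_opNorm_diagonal, norm_prod_subsets_eq_prod_sort heig hkd]
  calc opNorm (compound k A) = √(‖compound k A‖ * ‖compound k A‖) :=
        (Real.sqrt_mul_self (norm_nonneg _)).symm
    _ = ∏ m : Fin k, svalN A m := by
        rw [hsq, Real.sqrt_prod _ fun m _ => heig _]
        exact Finset.prod_congr rfl fun m _ => by rw [svalN, dif_pos (m.2.trans_le hkd)]; rfl
    _ = ∏ i ∈ Finset.range k, svalN A i := Fin.prod_univ_eq_prod_range _ k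

/-- For any `d × d` real matrix `A` and `1 ≤ k ≤ d`, the operator norm of the
`k`-th exterior power of `A` (represented by the compound matrix in the orthonormal wedge
basis) equals the product of the `k` largest singular values:
`‖A^∧k‖ = α₁(A) ⋯ α_k(A)`. -/
theorem stmt4 {d k : ℕ} (hk1 : 1 ≤ k) (hkd : k ≤ d) (A : Matrix (Fin d) (Fin d) ℝ) :
    opNorm (compound k A) = ∏ i ∈ Finset.range k, svalN A i :=
  stmt4_general hkd A
end

section
/- Let ψ : L → ℝ≥0 be a submultiplicative function on the admissible words of a mixing subshift of finite type which is quasi-multiplicative with constants c > 0 and k ∈ ℕ, and suppose ψ(I) ≤ Υ^{|I|} for some Υ ≥ 1 and ψ(I) > 0 for all I. Then the sequence aₙ = log ∑_{I ∈ L(n)} ψ(I) is almost superadditive with constant C = log(c⁻¹ · ∑_{i=0}^{k} Υ^{i} · q^{i}), where q is the number of symbols; in particular lim aₙ/n exists and equals a finite number P with |P − aₜ/t| ≤ C/t for all t. -/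
/-!
Summing submultiplicativity over words gives `S (n + m) ≤ S n * S m` for
`S n = ∑_{I ∈ L(n)} ψ(I)`. Conversely, quasi-multiplicativity glues each pair `(I, J)` into a
word `I K J` with `|K| = i ≤ k` from which `I` and `J` can be read off, so
`c S n S m ≤ ∑_{i ≤ k} S (n + i + m) ≤ S (n + m) ∑_{i ≤ k} S i`, and `S i ≤ Υ^i q^i`.
Hence `aₙ = log S n` is subadditive and `aₙ - C` is superadditive; Fekete's lemma applied to
both squeezes the limit `P` between `aₜ/t - C/t` and `aₜ/t`.
-/

/-- A word `w` of length `n` is admissible for the adjacency matrix `T` if all consecutive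
transitions are allowed. -/
def AdmW {q : ℕ} (T : Fin q → Fin q → Bool) {n : ℕ} (w : Fin n → Fin q) : Prop :=
  ∀ (i : ℕ) (h : i + 1 < n), T (w ⟨i, by omega⟩) (w ⟨i + 1, h⟩) = true

open Classical in
/-- `∑_{I ∈ L(n)} ψ(I)`, the sum of `ψ` over all admissible words of length `n`. -/
noncomputable def wordSum (q : ℕ) (T : Fin q → Fin q → Bool)
    (ψ : ∀ n : ℕ, (Fin n → Fin q) → ℝ) (n : ℕ) : ℝ :=
  ∑ w : Fin n → Fin q, if AdmW T w then ψ n w else 0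

section Fekete

open Filter Topology

theorem exists_tendsto_div_of_subadditive_pos {u : ℕ → ℝ}
    (hu : ∀ m n, 1 ≤ m → 1 ≤ n → u (m + n) ≤ u m + u n) {B : ℝ}
    (hB : ∀ n, 1 ≤ n → B ≤ u n / n) :
    ∃ L, Tendsto (fun n ↦ u n / n) atTop (𝓝 L) ∧ ∀ t, 1 ≤ t → L ≤ u t / t := by
  -- `Subadditive` also constrains the index `0`, where `u` is arbitrary.
  set v : ℕ → ℝ := fun n ↦ if n = 0 then 0 else u n with hv
  have hv_eq : ∀ n, 1 ≤ n → v n = u n := fun n hn ↦ if_neg (by omega)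
  have hsub : Subadditive v := by
    intro m n
    rcases Nat.eq_zero_or_pos m with rfl | hm
    · simp [hv]
    rcases Nat.eq_zero_or_pos n with rfl | hn
    · simp [hv]
    rw [hv_eq _ hm, hv_eq _ hn, hv_eq _ (by omega)]
    exact hu m n hm hn
  have hbdd : BddBelow (Set.range fun n ↦ v n / n) := by
    refine ⟨min B 0, Set.forall_mem_range.2 fun n ↦ ?_⟩
    rcases Nat.eq_zero_or_pos n with rfl | hn
    · simp
    · rw [hv_eq n hn]
      exact (min_le_left _ _).trans (hB n hn)
  refine ⟨hsub.lim, (hsub.tendsto_lim hbdd).congr' ?_, fun t ht ↦ ?_⟩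
  · filter_upwards [eventually_ge_atTop 1] with n hn
    rw [hv_eq n hn]
  · simpa only [hv_eq t ht] using hsub.lim_le_div hbdd (n := t) (by omega)

theorem exists_tendsto_div_of_almost_superadditive {a : ℕ → ℝ} {C : ℝ}
    (hsub : ∀ m n, 1 ≤ m → 1 ≤ n → a (m + n) ≤ a m + a n)
    (hsup : ∀ m n, 1 ≤ m → 1 ≤ n → a m + a n - C ≤ a (m + n)) :
    ∃ P, Tendsto (fun n ↦ a n / n) atTop (𝓝 P) ∧ ∀ t, 1 ≤ t → |P - a t / t| ≤ C / t := by
  have hC : 0 ≤ C := by linarith [hsub 1 1 le_rfl le_rfl, hsup 1 1 le_rfl le_rfl]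
  have hlow : ∀ n, 1 ≤ n → n * (a 1 - C) ≤ a n - C := by
    intro n hn
    induction n, hn using Nat.le_induction with
    | base => simp
    | succ n hn ih => push_cast; linarith [hsup n 1 hn le_rfl]
  have hup : ∀ n, 1 ≤ n → a n ≤ n * a 1 := by
    intro n hn
    induction n, hn using Nat.le_induction with
    | base => simp
    | succ n hn ih => push_cast; linarith [hsub n 1 hn le_rfl]
  obtain ⟨P, hP, hP_le⟩ := exists_tendsto_div_of_subadditive_pos hsub (B := a 1 - C)
    fun n hn ↦ by
      rw [le_div_iff₀ (by positivity)]
      linarith [hlow n hn]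
  obtain ⟨Q, hQ, hQ_le⟩ := exists_tendsto_div_of_subadditive_pos (u := fun n ↦ C - a n)
    (fun m n hm hn ↦ by linarith [hsup m n hm hn]) (B := -a 1) fun n hn ↦ by
      rw [le_div_iff₀ (by positivity)]
      linarith [hup n hn]
  have hQP : Q = -P := by
    refine tendsto_nhds_unique hQ ?_
    simpa [sub_div] using (tendsto_const_div_atTop_nhds_zero_nat C).sub hP
  refine ⟨P, hP, fun t ht ↦ abs_le.2 ⟨?_, ?_⟩⟩
  · have := hQ_le t ht
    rw [hQP, sub_div] at this
    linarith
  · linarith [hP_le t ht, div_nonneg hC (Nat.cast_nonneg t)]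

end Fekete

theorem eq_and_eq_of_sigma_append_append_eq {α : Type*} {n m a b : ℕ} {I I' : Fin n → α}
    {K : Fin a → α} {K' : Fin b → α} {J J' : Fin m → α}
    (h : (⟨a, Fin.append (Fin.append I K) J⟩ : Σ j, Fin (n + j + m) → α) =
      ⟨b, Fin.append (Fin.append I' K') J'⟩) : I = I' ∧ J = J' := by
  obtain ⟨rfl, h⟩ := Sigma.mk.inj_iff.mp h
  replace h := eq_of_heq h
  exact ⟨funext fun i ↦ by simpa using congrFun h (Fin.castAdd m (Fin.castAdd a i)),
    funext fun j ↦ by simpa using congrFun h (Fin.natAdd _ j)⟩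

namespace SFT

variable {q : ℕ} {T : Fin q → Fin q → Bool}

def Positive (T : Fin q → Fin q → Bool) (ψ : ∀ n : ℕ, (Fin n → Fin q) → ℝ) : Prop :=
  ∀ (n : ℕ) (w : Fin n → Fin q), AdmW T w → 0 < ψ n w

def Submultiplicative (T : Fin q → Fin q → Bool) (ψ : ∀ n : ℕ, (Fin n → Fin q) → ℝ) : Prop :=
  ∀ (n m : ℕ) (wI : Fin n → Fin q) (wJ : Fin m → Fin q),
    AdmW T (Fin.append wI wJ) → ψ (n + m) (Fin.append wI wJ) ≤ ψ n wI * ψ m wJ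

def QuasiMultiplicative (T : Fin q → Fin q → Bool) (ψ : ∀ n : ℕ, (Fin n → Fin q) → ℝ)
    (c : ℝ) (k : ℕ) : Prop :=
  ∀ (n m : ℕ) (wI : Fin n → Fin q) (wJ : Fin m → Fin q), AdmW T wI → AdmW T wJ →
    ∃ (nK : ℕ) (wK : Fin nK → Fin q), nK ≤ k ∧
      AdmW T (Fin.append (Fin.append wI wK) wJ) ∧
      c * ψ n wI * ψ m wJ ≤ ψ (n + nK + m) (Fin.append (Fin.append wI wK) wJ)

theorem AdmW.of_append_left {n m : ℕ} {u : Fin n → Fin q} {v : Fin m → Fin q}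
    (h : AdmW T (Fin.append u v)) : AdmW T u := fun i hi ↦ by
  have h' : T (Fin.append u v (Fin.castAdd m ⟨i, by omega⟩))
      (Fin.append u v (Fin.castAdd m ⟨i + 1, hi⟩)) = true := h i (by omega)
  rwa [Fin.append_left, Fin.append_left] at h'

theorem AdmW.of_append_right {n m : ℕ} {u : Fin n → Fin q} {v : Fin m → Fin q}
    (h : AdmW T (Fin.append u v)) : AdmW T v := fun i hi ↦ by
  have h' : T (Fin.append u v (Fin.natAdd n ⟨i, by omega⟩))
      (Fin.append u v (Fin.natAdd n ⟨i + 1, hi⟩)) = true := h (n + i) (by omega)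
  rwa [Fin.append_right, Fin.append_right] at h'

theorem AdmW.cons {n : ℕ} {a : Fin q} {w : Fin (n + 1) → Fin q} (hw : AdmW T w)
    (ha : T a (w 0) = true) : AdmW T (Fin.cons a w : Fin (n + 2) → Fin q) := by
  rintro (_ | i) hi
  · exact ha
  · change T ((Fin.cons a w : Fin (n + 2) → Fin q) (Fin.succ ⟨i, by omega⟩))
      ((Fin.cons a w : Fin (n + 2) → Fin q) (Fin.succ ⟨i + 1, by omega⟩)) = true
    rw [Fin.cons_succ, Fin.cons_succ]
    exact hw i (by omega)

theorem exists_admW_of_forall_exists (hT : ∀ a, ∃ b, T a b = true) (a : Fin q) (n : ℕ) :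
    ∃ w : Fin (n + 1) → Fin q, AdmW T w ∧ w 0 = a := by
  induction n generalizing a with
  | zero => exact ⟨fun _ ↦ a, fun i hi ↦ by omega, rfl⟩
  | succ n ih =>
    obtain ⟨b, hab⟩ := hT a
    obtain ⟨w, hw, rfl⟩ := ih b
    exact ⟨Fin.cons a w, AdmW.cons hw hab, rfl⟩

section wordSum

variable {ψ : ∀ n : ℕ, (Fin n → Fin q) → ℝ}

open Classical in
theorem ite_admW_nonneg (hpos : Positive T ψ) {n : ℕ} (w : Fin n → Fin q) :
    0 ≤ if AdmW T w then ψ n w else 0 := by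
  split_ifs with h
  exacts [(hpos n w h).le, le_rfl]

theorem wordSum_nonneg (hpos : Positive T ψ) (n : ℕ) :
    0 ≤ wordSum q T ψ n :=
  Finset.sum_nonneg fun w _ ↦ ite_admW_nonneg hpos w

theorem wordSum_pos (hpos : Positive T ψ) {n : ℕ} {w : Fin n → Fin q} (hw : AdmW T w) :
    0 < wordSum q T ψ n :=
  Finset.sum_pos' (fun v _ ↦ ite_admW_nonneg hpos v)
    ⟨w, Finset.mem_univ w, by rw [if_pos hw]; exact hpos n w hw⟩

theorem wordSum_le_pow {Υ : ℝ} (hΥ : 0 ≤ Υ)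
    (hbd : ∀ (n : ℕ) (w : Fin n → Fin q), AdmW T w → ψ n w ≤ Υ ^ n) (n : ℕ) :
    wordSum q T ψ n ≤ Υ ^ n * (q : ℝ) ^ n := by
  calc wordSum q T ψ n ≤ ∑ _w : Fin n → Fin q, Υ ^ n := by
        refine Finset.sum_le_sum fun w _ ↦ ?_
        split_ifs with h
        exacts [hbd n w h, by positivity]
    _ = Υ ^ n * (q : ℝ) ^ n := by simp [mul_comm]

open Classical in
theorem wordSum_add_le (hpos : Positive T ψ) (hsub : Submultiplicative T ψ) (n m : ℕ) :
    wordSum q T ψ (n + m) ≤ wordSum q T ψ n * wordSum q T ψ m := by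
  rw [wordSum, wordSum, wordSum, Fintype.sum_mul_sum, ← Fintype.sum_prod_type',
    ← (Fin.appendEquiv n m).sum_comp]
  refine Finset.sum_le_sum fun p _ ↦ ?_
  change (if AdmW T (Fin.append p.1 p.2) then ψ (n + m) (Fin.append p.1 p.2) else 0) ≤ _
  by_cases h : AdmW T (Fin.append p.1 p.2)
  · rw [if_pos h, if_pos (AdmW.of_append_left h), if_pos (AdmW.of_append_right h)]
    exact hsub n m p.1 p.2 h
  · rw [if_neg h]
    exact mul_nonneg (ite_admW_nonneg hpos _) (ite_admW_nonneg hpos _)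

open Classical in
theorem mul_wordSum_mul_le_sum (hpos : Positive T ψ)
    {c : ℝ} {k : ℕ} (hqm : QuasiMultiplicative T ψ c k) (n m : ℕ) :
    c * (wordSum q T ψ n * wordSum q T ψ m) ≤
      ∑ i ∈ Finset.range (k + 1), wordSum q T ψ (n + i + m) := by
  have H : ∀ p : (Fin n → Fin q) × (Fin m → Fin q), ∃ (i : ℕ) (K : Fin i → Fin q), i ≤ k ∧
      (AdmW T p.1 → AdmW T p.2 → AdmW T (Fin.append (Fin.append p.1 K) p.2) ∧
        c * ψ n p.1 * ψ m p.2 ≤ ψ (n + i + m) (Fin.append (Fin.append p.1 K) p.2)) := by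
    intro p
    by_cases h : AdmW T p.1 ∧ AdmW T p.2
    · obtain ⟨i, K, hik, hK⟩ := hqm n m p.1 p.2 h.1 h.2
      exact ⟨i, K, hik, fun _ _ ↦ hK⟩
    · exact ⟨0, Fin.elim0, k.zero_le, fun h₁ h₂ ↦ absurd ⟨h₁, h₂⟩ h⟩
  choose i K hik hK using H
  -- Each admissible pair `(I, J)` is sent to its glued word `I K J`, which determines it.
  let e (p : (Fin n → Fin q) × (Fin m → Fin q)) : Σ j, Fin (n + j + m) → Fin q :=
    ⟨i p, Fin.append (Fin.append p.1 (K p)) p.2⟩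
  let g (x : Σ j, Fin (n + j + m) → Fin q) : ℝ := if AdmW T x.2 then ψ _ x.2 else 0
  let s := Finset.univ.filter fun p : (Fin n → Fin q) × (Fin m → Fin q) ↦ AdmW T p.1 ∧ AdmW T p.2
  have he : Set.InjOn e s := fun p _ p' _ hpp' ↦
    Prod.ext_iff.2 (eq_and_eq_of_sigma_append_append_eq hpp')
  calc c * (wordSum q T ψ n * wordSum q T ψ m) = ∑ p ∈ s, c * ψ n p.1 * ψ m p.2 := by
        rw [wordSum, wordSum, Fintype.sum_mul_sum, ← Fintype.sum_prod_type', Finset.mul_sum,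
          Finset.sum_filter]
        refine Finset.sum_congr rfl fun p _ ↦ ?_
        by_cases h₁ : AdmW T p.1 <;> by_cases h₂ : AdmW T p.2 <;> simp [h₁, h₂, mul_assoc]
    _ ≤ ∑ p ∈ s, g (e p) := Finset.sum_le_sum fun p hp ↦ by
        obtain ⟨h₁, h₂⟩ := (Finset.mem_filter.1 hp).2
        simpa only [g, e, if_pos (hK p h₁ h₂).1] using (hK p h₁ h₂).2
    _ = ∑ x ∈ s.image e, g x := (Finset.sum_image he).symm
    _ ≤ ∑ x ∈ (Finset.range (k + 1)).sigma fun _ ↦ Finset.univ, g x := by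
        refine Finset.sum_le_sum_of_subset_of_nonneg ?_ fun x _ _ ↦ ite_admW_nonneg hpos x.2
        intro x hx
        obtain ⟨p, -, rfl⟩ := Finset.mem_image.1 hx
        simpa [e] using Nat.lt_succ_of_le (hik p)
    _ = ∑ j ∈ Finset.range (k + 1), wordSum q T ψ (n + j + m) := Finset.sum_sigma _ _ _

theorem mul_wordSum_mul_le (hpos : Positive T ψ)
    (hsub : Submultiplicative T ψ) {Υ : ℝ} (hΥ : 0 ≤ Υ)
    (hbd : ∀ (n : ℕ) (w : Fin n → Fin q), AdmW T w → ψ n w ≤ Υ ^ n)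
    {c : ℝ} {k : ℕ} (hqm : QuasiMultiplicative T ψ c k) (n m : ℕ) :
    c * (wordSum q T ψ n * wordSum q T ψ m) ≤
      (∑ i ∈ Finset.range (k + 1), Υ ^ i * (q : ℝ) ^ i) * wordSum q T ψ (n + m) := by
  calc c * (wordSum q T ψ n * wordSum q T ψ m)
      ≤ ∑ i ∈ Finset.range (k + 1), wordSum q T ψ (n + i + m) :=
        mul_wordSum_mul_le_sum hpos hqm n m
    _ ≤ ∑ i ∈ Finset.range (k + 1), Υ ^ i * (q : ℝ) ^ i * wordSum q T ψ (n + m) :=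
        Finset.sum_le_sum fun i _ ↦ by
          rw [add_right_comm, mul_comm]
          exact (wordSum_add_le hpos hsub _ _).trans <|
            mul_le_mul_of_nonneg_left (wordSum_le_pow hΥ hbd i) (wordSum_nonneg hpos _)
    _ = _ := (Finset.sum_mul _ _ _).symm

end wordSum

end SFT

open Filter in
/-- Let `ψ` be a positive submultiplicative function on the admissible words
of a mixing subshift of finite type (with `T^τ̄ > 0`) which is quasi-multiplicative with
constants `c > 0`, `k ∈ ℕ`, and satisfies `ψ(I) ≤ Υ^{|I|}` with `Υ ≥ 1`. Then
`aₙ = log ∑_{I ∈ L(n)} ψ(I)` is almost superadditive with constant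
`C = log (c⁻¹ ∑_{i=0}^k Υ^i q^i)`; in particular `lim aₙ/n` exists, is finite, and satisfies
`|P − aₜ/t| ≤ C/t` for all `t ≥ 1`. -/
theorem stmt7 (q : ℕ) (hq : 1 ≤ q) (T : Fin q → Fin q → Bool)
    (τ : ℕ) (hτ : 1 ≤ τ)
    (hprim : ∀ a b : Fin q, ∃ w : Fin (τ + 1) → Fin q,
      AdmW T w ∧ w 0 = a ∧ w (Fin.last τ) = b)
    (ψ : ∀ n : ℕ, (Fin n → Fin q) → ℝ)
    (hpos : ∀ (n : ℕ) (w : Fin n → Fin q), AdmW T w → 0 < ψ n w)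
    (hsub : ∀ (n m : ℕ) (wI : Fin n → Fin q) (wJ : Fin m → Fin q),
      AdmW T (Fin.append wI wJ) → ψ (n + m) (Fin.append wI wJ) ≤ ψ n wI * ψ m wJ)
    (Υ : ℝ) (hΥ : 1 ≤ Υ)
    (hbd : ∀ (n : ℕ) (w : Fin n → Fin q), AdmW T w → ψ n w ≤ Υ ^ n)
    (c : ℝ) (hc : 0 < c) (k : ℕ)
    (hqm : ∀ (n m : ℕ) (wI : Fin n → Fin q) (wJ : Fin m → Fin q), AdmW T wI → AdmW T wJ →
      ∃ (nK : ℕ) (wK : Fin nK → Fin q), nK ≤ k ∧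
        AdmW T (Fin.append (Fin.append wI wK) wJ) ∧
        c * ψ n wI * ψ m wJ ≤ ψ (n + nK + m) (Fin.append (Fin.append wI wK) wJ)) :
    (∀ n m : ℕ, 1 ≤ n → 1 ≤ m →
      Real.log (wordSum q T ψ n) + Real.log (wordSum q T ψ m) -
          Real.log (c⁻¹ * ∑ i ∈ Finset.range (k + 1), Υ ^ i * (q : ℝ) ^ i)
        ≤ Real.log (wordSum q T ψ (n + m))) ∧
    ∃ P : ℝ,
      Tendsto (fun n : ℕ => Real.log (wordSum q T ψ n) / n) atTop (nhds P) ∧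
      ∀ t : ℕ, 1 ≤ t →
        |P - Real.log (wordSum q T ψ t) / t| ≤
          Real.log (c⁻¹ * ∑ i ∈ Finset.range (k + 1), Υ ^ i * (q : ℝ) ^ i) / t := by
  have hT : ∀ a, ∃ b, T a b = true := fun a ↦ by
    obtain ⟨w, hw, hw0, -⟩ := hprim a a
    exact ⟨w ⟨1, by omega⟩, hw0 ▸ hw 0 (by omega)⟩
  have hS : ∀ n, 1 ≤ n → 0 < wordSum q T ψ n := fun n hn ↦ by
    obtain ⟨n, rfl⟩ := Nat.exists_eq_add_of_le' hn
    obtain ⟨w, hw, -⟩ := SFT.exists_admW_of_forall_exists hT ⟨0, hq⟩ n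
    exact SFT.wordSum_pos hpos hw
  have hΥ₀ : 0 < Υ := zero_lt_one.trans_le hΥ
  have hq₀ : (0 : ℝ) < q := by exact_mod_cast hq
  have hsup : ∀ n m : ℕ, 1 ≤ n → 1 ≤ m →
      Real.log (wordSum q T ψ n) + Real.log (wordSum q T ψ m) -
          Real.log (c⁻¹ * ∑ i ∈ Finset.range (k + 1), Υ ^ i * (q : ℝ) ^ i)
        ≤ Real.log (wordSum q T ψ (n + m)) := fun n m hn hm ↦ by
    have h : wordSum q T ψ n * wordSum q T ψ m ≤
        (c⁻¹ * ∑ i ∈ Finset.range (k + 1), Υ ^ i * (q : ℝ) ^ i) * wordSum q T ψ (n + m) := by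
      rw [mul_assoc, le_inv_mul_iff₀ hc]
      exact SFT.mul_wordSum_mul_le hpos hsub hΥ₀.le hbd hqm n m
    rw [← Real.log_mul (hS n hn).ne' (hS m hm).ne', sub_le_iff_le_add',
      ← Real.log_mul (by positivity) (hS _ (by omega)).ne']
    exact Real.log_le_log (mul_pos (hS n hn) (hS m hm)) h
  refine ⟨hsup, exists_tendsto_div_of_almost_superadditive (fun n m hn hm ↦ ?_) hsup⟩
  rw [← Real.log_mul (hS n hn).ne' (hS m hm).ne']
  exact Real.log_le_log (hS _ (by omega)) (SFT.wordSum_add_le hpos hsub n m)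
end

section
/- Define N_i = ⌊γ i⌋ for i odd and N_i = ⌊(1−γ) i⌋ for i even, where γ ∈ (0,1). Then: (a) N_i → ∞; (b) (i+1)N_{i+1} / ∑_{j=1}^{i} jN_j → 0; and (c) ∑_{j=1}^{i} (2j−1)N_{2j−1} / ∑_{j=1}^{2i} jN_j → γ as i → ∞. -/
/-! With `c_j = γ` for odd `j` and `c_j = 1 - γ` for even `j`, we have `N_j = ⌊c_j j⌋₊`, hence
`|j N_j - c_j j²| ≤ j`. Summing, the odd- and even-indexed parts of `∑_{j ≤ 2i} j N_j` are
`(4γ/3) i³ + O(i²)` and `(4(1-γ)/3) i³ + O(i²)`, which gives (c). Parts (a) and (b) only use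
`⌊m j⌋₊ ≤ N_j ≤ j` with `m = min γ (1-γ) > 0`: the numerator of (b) is `O(i²)`, while the
denominator is at least `∑_{j ≤ i} j ⌊m j⌋₊ ~ m i³/3`. -/

open Filter Topology Finset

lemma abs_mul_floor_sub_le {c x : ℝ} (hc : 0 ≤ c) (hx : 0 ≤ x) :
    |x * ⌊c * x⌋₊ - c * x ^ 2| ≤ x := by
  have hle : (⌊c * x⌋₊ : ℝ) ≤ c * x := Nat.floor_le (by positivity)
  have hgt : c * x - 1 < ⌊c * x⌋₊ := Nat.sub_one_lt_floor _
  rw [abs_le]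
  constructor <;> nlinarith

lemma abs_sum_mul_floor_sub_le {ι : Type*} (s : Finset ι) {c : ℝ} (hc : 0 ≤ c) {x : ι → ℝ}
    (hx : ∀ j, 0 ≤ x j) :
    |∑ j ∈ s, x j * ⌊c * x j⌋₊ - c * ∑ j ∈ s, x j ^ 2| ≤ ∑ j ∈ s, x j := by
  rw [mul_sum, ← sum_sub_distrib]
  exact (abs_sum_le_sum_abs _ _).trans (sum_le_sum fun j _ => abs_mul_floor_sub_le hc (hx j))

lemma sum_Icc_mul_sub {a b : ℕ} (hba : b ≤ a) (n : ℕ) :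
    ∑ j ∈ Icc 1 n, ((a * j - b : ℕ) : ℝ) = a * n * (n + 1) / 2 - b * n := by
  induction n with
  | zero => simp
  | succ n ih =>
    rw [sum_Icc_succ_top (by omega), ih,
      Nat.cast_sub (hba.trans (Nat.le_mul_of_pos_right a n.succ_pos))]
    push_cast
    ring

lemma sum_Icc_mul_sub_sq {a b : ℕ} (hba : b ≤ a) (n : ℕ) :
    ∑ j ∈ Icc 1 n, ((a * j - b : ℕ) : ℝ) ^ 2
      = a ^ 2 * n * (n + 1) * (2 * n + 1) / 6 - a * b * n * (n + 1) + b ^ 2 * n := by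
  induction n with
  | zero => simp
  | succ n ih =>
    rw [sum_Icc_succ_top (by omega), ih,
      Nat.cast_sub (hba.trans (Nat.le_mul_of_pos_right a n.succ_pos))]
    push_cast
    ring

lemma tendsto_of_eq_comp_inv {f : ℕ → ℝ} {P : ℝ → ℝ} (hP : Continuous P)
    (hf : ∀ n : ℕ, n ≠ 0 → f n = P (n : ℝ)⁻¹) : Tendsto f atTop (𝓝 (P 0)) :=
  ((hP.tendsto 0).comp tendsto_inv_atTop_nhds_zero_nat).congr'
    ((eventually_ne_atTop 0).mono fun n hn => (hf n hn).symm)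

lemma tendsto_div_of_tendsto_div {α : Type*} {l : Filter α} {u v w : α → ℝ} {a b : ℝ}
    (hw : ∀ᶠ x in l, w x ≠ 0) (hu : Tendsto (fun x => u x / w x) l (𝓝 a))
    (hv : Tendsto (fun x => v x / w x) l (𝓝 b)) (hb : b ≠ 0) :
    Tendsto (fun x => u x / v x) l (𝓝 (a / b)) :=
  (hu.div hv hb).congr' (hw.mono fun _ hx => div_div_div_cancel_right₀ hx _ _)

lemma tendsto_sum_mul_floor_div_cube {c : ℝ} (hc : 0 ≤ c) {a b : ℕ} (hba : b ≤ a) :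
    Tendsto (fun n : ℕ =>
        ((∑ j ∈ Icc 1 n, (a * j - b) * ⌊c * ((a * j - b : ℕ) : ℝ)⌋₊ : ℕ) : ℝ) / (n : ℝ) ^ 3)
      atTop (𝓝 (c * a ^ 2 / 3)) := by
  set x : ℕ → ℝ := fun j => ((a * j - b : ℕ) : ℝ)
  have hsq : Tendsto (fun n : ℕ => c * (∑ j ∈ Icc 1 n, x j ^ 2) / (n : ℝ) ^ 3) atTop
      (𝓝 (c * a ^ 2 / 3)) := by
    convert tendsto_of_eq_comp_inv
      (P := fun t => c * (a ^ 2 * (1 + t) * (2 + t) / 6 - a * b * t * (1 + t) + b ^ 2 * t ^ 2))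
      (by fun_prop) fun n hn => ?_ using 2
    · ring
    · rw [sum_Icc_mul_sub_sq hba]
      field_simp
  have hlin : Tendsto (fun n : ℕ => (∑ j ∈ Icc 1 n, x j) / (n : ℝ) ^ 3) atTop (𝓝 0) := by
    convert tendsto_of_eq_comp_inv (P := fun t => a * t * (1 + t) / 2 - b * t ^ 2)
      (by fun_prop) fun n hn => ?_ using 2
    · ring
    · rw [sum_Icc_mul_sub hba]
      field_simp
  have herr : Tendsto (fun n : ℕ =>
      (∑ j ∈ Icc 1 n, x j * ⌊c * x j⌋₊ - c * ∑ j ∈ Icc 1 n, x j ^ 2) / (n : ℝ) ^ 3)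
      atTop (𝓝 0) := by
    refine squeeze_zero_norm (fun n => ?_) hlin
    rw [norm_div, Real.norm_eq_abs, norm_pow, Real.norm_natCast]
    exact div_le_div_of_nonneg_right (abs_sum_mul_floor_sub_le _ hc fun j => Nat.cast_nonneg _)
      (by positivity)
  convert herr.add hsq using 2 with n
  · push_cast
    ring
  · ring

lemma sum_Icc_two_mul {M : Type*} [AddCommMonoid M] (f : ℕ → M) (n : ℕ) :
    ∑ j ∈ Icc 1 (2 * n), f j = ∑ j ∈ Icc 1 n, (f (2 * j - 1) + f (2 * j)) := by
  induction n with
  | zero => simp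
  | succ n ih =>
    rw [show 2 * (n + 1) = 2 * n + 1 + 1 by ring, sum_Icc_succ_top (by omega),
      sum_Icc_succ_top (by omega), ih, sum_Icc_succ_top (by omega), add_assoc]
    congr 3

lemma tendsto_mul_div_sum_mul_nhds_zero {N : ℕ → ℕ} {m : ℝ} (hm : 0 < m)
    (hlow : ∀ j : ℕ, ⌊m * j⌋₊ ≤ N j) (hup : ∀ j, N j ≤ j) :
    Tendsto (fun n : ℕ =>
        (((n + 1) * N (n + 1) : ℕ) : ℝ) / ((∑ j ∈ Icc 1 n, j * N j : ℕ) : ℝ))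
      atTop (𝓝 0) := by
  set D : ℕ → ℝ := fun n => ((∑ j ∈ Icc 1 n, j * ⌊m * j⌋₊ : ℕ) : ℝ)
  have hD : Tendsto (fun n : ℕ => D n / (n : ℝ) ^ 3) atTop (𝓝 (m / 3)) := by
    simpa only [one_mul, Nat.sub_zero, Nat.cast_one, one_pow, mul_one] using
      tendsto_sum_mul_floor_div_cube hm.le (Nat.zero_le 1)
  have hsq : Tendsto (fun n : ℕ => ((n : ℝ) + 1) ^ 2 / (n : ℝ) ^ 3) atTop (𝓝 0) := by
    convert tendsto_of_eq_comp_inv (P := fun t => t * (1 + t) ^ 2) (by fun_prop)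
      fun n hn => ?_ using 2
    · ring
    · field_simp
  have hD_pos : ∀ᶠ n in atTop, 0 < D n := by
    filter_upwards [hD.eventually (lt_mem_nhds (by positivity : 0 < m / 3))] with n hn
    by_contra! h
    exact hn.not_ge (div_nonpos_of_nonpos_of_nonneg h (by positivity))
  have hbound := tendsto_div_of_tendsto_div ((eventually_ne_atTop 0).mono fun n hn => by
    positivity) hsq hD (by positivity)
  rw [zero_div] at hbound
  refine tendsto_of_tendsto_of_tendsto_of_le_of_le' tendsto_const_nhds hbound
    (Eventually.of_forall fun n => by positivity) ?_
  filter_upwards [hD_pos] with n hn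
  have hnum : (((n + 1) * N (n + 1) : ℕ) : ℝ) ≤ ((n : ℝ) + 1) ^ 2 := by
    rw [sq]
    exact_mod_cast Nat.mul_le_mul_left _ (hup _)
  have hden : D n ≤ ((∑ j ∈ Icc 1 n, j * N j : ℕ) : ℝ) :=
    Nat.cast_le.2 (sum_le_sum fun j _ => Nat.mul_le_mul_left _ (hlow j))
  exact div_le_div₀ (by positivity) hnum hn hden

lemma tendsto_sum_odd_mul_div_sum_mul {γ : ℝ} (hγ0 : 0 ≤ γ) (hγ1 : γ ≤ 1) {N : ℕ → ℕ}
    (hodd : ∀ i : ℕ, Odd i → N i = ⌊γ * i⌋₊) (heven : ∀ i : ℕ, Even i → N i = ⌊(1 - γ) * i⌋₊) :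
    Tendsto (fun i : ℕ =>
        ((∑ j ∈ Icc 1 i, (2 * j - 1) * N (2 * j - 1) : ℕ) : ℝ) /
          ((∑ j ∈ Icc 1 (2 * i), j * N j : ℕ) : ℝ))
      atTop (𝓝 γ) := by
  have hA_eq (i : ℕ) : ∑ j ∈ Icc 1 i, (2 * j - 1) * N (2 * j - 1)
      = ∑ j ∈ Icc 1 i, (2 * j - 1) * ⌊γ * ((2 * j - 1 : ℕ) : ℝ)⌋₊ :=
    sum_congr rfl fun j hj => by rw [hodd _ ⟨j - 1, by grind⟩]
  have hB_eq (i : ℕ) : ∑ j ∈ Icc 1 i, 2 * j * N (2 * j)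
      = ∑ j ∈ Icc 1 i, 2 * j * ⌊(1 - γ) * ((2 * j : ℕ) : ℝ)⌋₊ :=
    sum_congr rfl fun j _ => by rw [heven _ (even_two_mul j)]
  have hsplit (i : ℕ) : ∑ j ∈ Icc 1 (2 * i), j * N j
      = ∑ j ∈ Icc 1 i, (2 * j - 1) * N (2 * j - 1) + ∑ j ∈ Icc 1 i, 2 * j * N (2 * j) := by
    rw [sum_Icc_two_mul, sum_add_distrib]
  have hA := tendsto_sum_mul_floor_div_cube hγ0 (by norm_num : 1 ≤ 2)
  have hB := tendsto_sum_mul_floor_div_cube (sub_nonneg.2 hγ1) (Nat.zero_le 2)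
  simp only [Nat.sub_zero] at hB
  simp only [← hA_eq, ← hB_eq] at hA hB
  have hS : Tendsto (fun i : ℕ => ((∑ j ∈ Icc 1 (2 * i), j * N j : ℕ) : ℝ) / (i : ℝ) ^ 3)
      atTop (𝓝 (4 / 3)) := by
    convert hA.add hB using 2 with i
    · rw [hsplit, Nat.cast_add, add_div]
    · push_cast
      ring
  convert tendsto_div_of_tendsto_div ((eventually_ne_atTop 0).mono fun n hn => by positivity)
    hA hS (by norm_num) using 2
  push_cast
  ring

/-- For `γ ∈ (0,1)` let `N i = ⌊γ i⌋` for `i` odd and `N i = ⌊(1−γ) i⌋`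
for `i` even. Then (a) `N i → ∞`; (b) `(i+1) N (i+1) / ∑_{j=1}^i j N j → 0`; and
(c) `∑_{j=1}^i (2j−1) N (2j−1) / ∑_{j=1}^{2i} j N j → γ`. -/
theorem stmt15 (γ : ℝ) (hγ : γ ∈ Set.Ioo (0 : ℝ) 1) (N : ℕ → ℕ)
    (hodd : ∀ i : ℕ, Odd i → N i = ⌊γ * i⌋₊)
    (heven : ∀ i : ℕ, Even i → N i = ⌊(1 - γ) * i⌋₊) :
    Tendsto N atTop atTop ∧
    Tendsto (fun i : ℕ =>
        (((i + 1) * N (i + 1) : ℕ) : ℝ) / ((∑ j ∈ Finset.Icc 1 i, j * N j : ℕ) : ℝ))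
      atTop (nhds 0) ∧
    Tendsto (fun i : ℕ =>
        ((∑ j ∈ Finset.Icc 1 i, (2 * j - 1) * N (2 * j - 1) : ℕ) : ℝ) /
          ((∑ j ∈ Finset.Icc 1 (2 * i), j * N j : ℕ) : ℝ))
      atTop (nhds γ) := by
  obtain ⟨hγ0, hγ1⟩ := hγ
  set m := min γ (1 - γ)
  have hm : 0 < m := lt_min hγ0 (sub_pos.2 hγ1)
  have hlow : ∀ j : ℕ, ⌊m * j⌋₊ ≤ N j := fun j => by
    rcases Nat.even_or_odd j with h | h
    · rw [heven j h]
      exact Nat.floor_le_floor (by gcongr; exact min_le_right _ _)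
    · rw [hodd j h]
      exact Nat.floor_le_floor (by gcongr; exact min_le_left _ _)
  have hup : ∀ j, N j ≤ j := fun j => by
    rcases Nat.even_or_odd j with h | h
    · rw [heven j h]
      exact Nat.floor_le_of_le (mul_le_of_le_one_left j.cast_nonneg (by linarith))
    · rw [hodd j h]
      exact Nat.floor_le_of_le (mul_le_of_le_one_left j.cast_nonneg hγ1.le)
  exact ⟨tendsto_atTop_mono hlow (tendsto_nat_floor_atTop.comp
      (tendsto_natCast_atTop_atTop.const_mul_atTop hm)),
    tendsto_mul_div_sum_mul_nhds_zero hm hlow hup,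
    tendsto_sum_odd_mul_div_sum_mul hγ0.le hγ1.le hodd heven⟩
end
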